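/- For every QSL(𝔄) formula f and every rational probability α ∈ [0,1], the size of the SL(𝔄) formula ⌈f⌉_α is at most 3 · |f| · 2^((π(f)+1)²), where |f| is the size of f and π(f) is its probabilistic size. -/

import Mathlib

namespace QSLPaper

open scoped Classical

noncomputable section

/-- Variables: a countably infinite set. -/
abbrev Var : Type := ℕ
/-- Values. -/
abbrev Val : Type := ℤ
/-- Locations: positive integers. -/
abbrev Loc : Type := ℕ+
/-- Stacks. -/
abbrev Stack : Type := Var → Val
/-- Heaps: finite partial functions from locations to `k`-tuples of values. -/
abbrev Heap (k : ℕ) : Type := Finmap (fun _ : Loc => Fin k → Val)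
/-- Program states: stack-heap pairs. -/
abbrev HState (k : ℕ) : Type := Stack × Heap k

/-- Syntax of separation logic `SL(𝔄)`; atoms are predicates, i.e. sets of states. -/
inductive SL (k : ℕ) : Type where
  | tt : SL k
  | atom (p : Set (HState k)) : SL k
  | not (φ : SL k) : SL k
  | and (φ ψ : SL k) : SL k
  | or (φ ψ : SL k) : SL k
  | ex (x : Var) (φ : SL k) : SL k
  | all (x : Var) (φ : SL k) : SL k
  | sep (φ ψ : SL k) : SL k
  | wand (φ ψ : SL k) : SL k

/-- Standard separation-logic satisfaction relation `(s,h) ⊨ φ`. -/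
def SL.sat {k : ℕ} : SL k → HState k → Prop
  | .tt, _ => True
  | .atom p, σ => σ ∈ p
  | .not φ, σ => ¬ φ.sat σ
  | .and φ ψ, σ => φ.sat σ ∧ ψ.sat σ
  | .or φ ψ, σ => φ.sat σ ∨ ψ.sat σ
  | .ex x φ, σ => ∃ v : Val, φ.sat (Function.update σ.1 x v, σ.2)
  | .all x φ, σ => ∀ v : Val, φ.sat (Function.update σ.1 x v, σ.2)
  | .sep φ ψ, σ => ∃ h₁ h₂ : Heap k, h₁.Disjoint h₂ ∧ σ.2 = h₁ ∪ h₂ ∧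
      φ.sat (σ.1, h₁) ∧ ψ.sat (σ.1, h₂)
  | .wand φ ψ, σ => ∀ h' : Heap k, σ.2.Disjoint h' → φ.sat (σ.1, h') →
      ψ.sat (σ.1, σ.2 ∪ h')

/-- A formula is pure if its satisfaction does not depend on the heap. -/
def SL.Pure {k : ℕ} (B : SL k) : Prop :=
  ∀ (s : Stack) (h h' : Heap k), B.sat (s, h) ↔ B.sat (s, h')

/-- All atoms of the formula belong to the set `𝔄` of atomic predicates. -/
def SL.atomsIn {k : ℕ} (𝔄 : Set (Set (HState k))) : SL k → Prop
  | .tt => True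
  | .atom p => p ∈ 𝔄
  | .not φ => φ.atomsIn 𝔄
  | .and φ ψ => φ.atomsIn 𝔄 ∧ ψ.atomsIn 𝔄
  | .or φ ψ => φ.atomsIn 𝔄 ∧ ψ.atomsIn 𝔄
  | .ex _ φ => φ.atomsIn 𝔄
  | .all _ φ => φ.atomsIn 𝔄
  | .sep φ ψ => φ.atomsIn 𝔄 ∧ ψ.atomsIn 𝔄
  | .wand φ ψ => φ.atomsIn 𝔄 ∧ ψ.atomsIn 𝔄

/-- Syntax of quantitative separation logic `QSL(𝔄)`:
`f ::= [φ] | [B]·f + [¬B]·f | q·f + (1−q)·f | f·f | 1−f | max(f,f) | min(f,f) |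
       Sup x: f | Inf x: f | f ⋆ f | [φ] ─⋆ f`. -/
inductive QSL (k : ℕ) : Type where
  | iver (φ : SL k) : QSL k
  | ite (B : SL k) (g u : QSL k) : QSL k
  | pch (q : ℚ) (g u : QSL k) : QSL k
  | mul (g u : QSL k) : QSL k
  | onem (g : QSL k) : QSL k
  | qmax (g u : QSL k) : QSL k
  | qmin (g u : QSL k) : QSL k
  | sup (x : Var) (g : QSL k) : QSL k
  | inf (x : Var) (g : QSL k) : QSL k
  | sep (g u : QSL k) : QSL k
  | wand (φ : SL k) (g : QSL k) : QSL k

/-- Well-formedness: guards of conditionals are pure, and all probabilities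
lie in `[0,1]`.  A term `f : QSL k` with `f.WF` (and atoms in `𝔄`)
is a `QSL(𝔄)` formula as generated by the grammar. -/
def QSL.WF {k : ℕ} : QSL k → Prop
  | .iver _ => True
  | .ite B g u => B.Pure ∧ g.WF ∧ u.WF
  | .pch q g u => 0 ≤ q ∧ q ≤ 1 ∧ g.WF ∧ u.WF
  | .mul g u => g.WF ∧ u.WF
  | .onem g => g.WF
  | .qmax g u => g.WF ∧ u.WF
  | .qmin g u => g.WF ∧ u.WF
  | .sup _ g => g.WF
  | .inf _ g => g.WF
  | .sep g u => g.WF ∧ u.WF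
  | .wand _ g => g.WF

/-- All atoms of a `QSL` formula belong to `𝔄`. -/
def QSL.atomsIn {k : ℕ} (𝔄 : Set (Set (HState k))) : QSL k → Prop
  | .iver φ => φ.atomsIn 𝔄
  | .ite B g u => B.atomsIn 𝔄 ∧ g.atomsIn 𝔄 ∧ u.atomsIn 𝔄
  | .pch _ g u => g.atomsIn 𝔄 ∧ u.atomsIn 𝔄
  | .mul g u => g.atomsIn 𝔄 ∧ u.atomsIn 𝔄
  | .onem g => g.atomsIn 𝔄
  | .qmax g u => g.atomsIn 𝔄 ∧ u.atomsIn 𝔄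
  | .qmin g u => g.atomsIn 𝔄 ∧ u.atomsIn 𝔄
  | .sup _ g => g.atomsIn 𝔄
  | .inf _ g => g.atomsIn 𝔄
  | .sep g u => g.atomsIn 𝔄 ∧ u.atomsIn 𝔄
  | .wand φ g => φ.atomsIn 𝔄 ∧ g.atomsIn 𝔄

/-- The semantics `⟦f⟧ : States → ℝ` of quantitative separation logic. -/
noncomputable def QSL.eval {k : ℕ} : QSL k → HState k → ℝ
  | .iver φ, σ => if φ.sat σ then 1 else 0
  | .ite B g u, σ =>
      (if B.sat σ then (1 : ℝ) else 0) * g.eval σ +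
      (if (SL.not B).sat σ then (1 : ℝ) else 0) * u.eval σ
  | .pch q g u, σ => (q : ℝ) * g.eval σ + (1 - (q : ℝ)) * u.eval σ
  | .mul g u, σ => g.eval σ * u.eval σ
  | .onem g, σ => 1 - g.eval σ
  | .qmax g u, σ => max (g.eval σ) (u.eval σ)
  | .qmin g u, σ => min (g.eval σ) (u.eval σ)
  | .sup x g, σ => sSup { r : ℝ | ∃ v : Val, r = g.eval (Function.update σ.1 x v, σ.2) }
  | .inf x g, σ => sInf { r : ℝ | ∃ v : Val, r = g.eval (Function.update σ.1 x v, σ.2) }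
  | .sep g u, σ => sSup { r : ℝ | ∃ h₁ h₂ : Heap k, h₁.Disjoint h₂ ∧ σ.2 = h₁ ∪ h₂ ∧
      r = g.eval (σ.1, h₁) * u.eval (σ.1, h₂) }
  | .wand φ g, σ =>
      if { r : ℝ | ∃ h' : Heap k, σ.2.Disjoint h' ∧ φ.sat (σ.1, h') ∧
            r = g.eval (σ.1, σ.2 ∪ h') } = (∅ : Set ℝ) then 1
      else sInf { r : ℝ | ∃ h' : Heap k, σ.2.Disjoint h' ∧ φ.sat (σ.1, h') ∧
            r = g.eval (σ.1, σ.2 ∪ h') }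

end

end QSLPaper

namespace QSLPaper

/-- Size of an `SL` formula (atoms have fixed atomic size 1). -/
def SL.size {k : ℕ} : SL k → ℕ
  | .tt => 1
  | .atom _ => 1
  | .not φ => 1 + φ.size
  | .and φ ψ => 1 + φ.size + ψ.size
  | .or φ ψ => 1 + φ.size + ψ.size
  | .ex _ φ => 1 + φ.size
  | .all _ φ => 1 + φ.size
  | .sep φ ψ => 1 + φ.size + ψ.size
  | .wand φ ψ => 1 + φ.size + ψ.size

/-- Size `|f|` of a `QSL` formula. -/
def QSL.size {k : ℕ} : QSL k → ℕ
  | .iver φ => φ.size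
  | .ite B g u => 1 + B.size + g.size + (1 + B.size) + u.size
  | .pch _ g u => 1 + g.size + u.size
  | .mul g u => 1 + g.size + u.size
  | .onem g => 1 + g.size
  | .qmax g u => 1 + g.size + u.size
  | .qmin g u => 1 + g.size + u.size
  | .sup _ g => 1 + g.size
  | .inf _ g => 1 + g.size
  | .sep g u => 1 + g.size + u.size
  | .wand φ g => 1 + g.size + φ.size

/-- Probabilistic size `π(f)` of a `QSL` formula. -/
def QSL.psize {k : ℕ} : QSL k → ℕ
  | .iver _ => 0
  | .ite _ g u => g.psize + u.psize
  | .pch _ g u => 1 + g.psize + u.psize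
  | .mul g u => 1 + g.psize + u.psize
  | .onem g => g.psize
  | .qmax g u => g.psize + u.psize
  | .qmin g u => g.psize + u.psize
  | .sup _ g => g.psize
  | .inf _ g => g.psize
  | .sep g u => 1 + g.psize + u.psize
  | .wand _ g => g.psize

/-- The evaluation set `Eval(f)` as a finite set of rationals. -/
def QSL.evalF {k : ℕ} : QSL k → Finset ℚ
  | .iver _ => {0, 1}
  | .ite _ g u => g.evalF ∪ u.evalF
  | .pch q g u => Finset.image₂ (fun β γ => q * β + (1 - q) * γ) g.evalF u.evalF
  | .mul g u => Finset.image₂ (fun β γ => β * γ) g.evalF u.evalF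
  | .onem g => g.evalF.image (fun β => 1 - β)
  | .qmax g u => g.evalF ∪ u.evalF
  | .qmin g u => g.evalF ∪ u.evalF
  | .sup _ g => g.evalF
  | .inf _ g => g.evalF
  | .sep g u => Finset.image₂ (fun β γ => β * γ) g.evalF u.evalF
  | .wand _ g => g.evalF

/-- A nonempty disjunction `φ ∨ ψ₁ ∨ … ∨ ψₙ`. -/
def SL.orChain {k : ℕ} : SL k → List (SL k) → SL k
  | φ, [] => φ
  | φ, ψ :: l => .or φ (SL.orChain ψ l)

/-- Disjunction of a list of formulae (`false`, i.e. `¬true`, for the empty list;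
in all uses below the list is provably nonempty). -/
def SL.orList {k : ℕ} : List (SL k) → SL k
  | [] => .not .tt
  | φ :: l => SL.orChain φ l

/-- The construction `⌈f⌉_α` of an `SL(𝔄)` formula characterizing `α ≤ ⟦f⟧`. -/
noncomputable def QSL.atLeast {k : ℕ} : QSL k → ℚ → SL k
  | .iver φ, α => if α ≤ 0 then .tt else φ
  | .ite B g u, α => .or (.and B (g.atLeast α)) (.and (.not B) (u.atLeast α))
  | .pch q g u, α =>
      SL.orList ((((g.evalF ×ˢ u.evalF).filter
          (fun p => α ≤ q * p.1 + (1 - q) * p.2)).toList).map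
        (fun p => .and (g.atLeast p.1) (u.atLeast p.2)))
  | .mul g u, α =>
      SL.orList ((((g.evalF ×ˢ u.evalF).filter (fun p => α ≤ p.1 * p.2)).toList).map
        (fun p => .and (g.atLeast p.1) (u.atLeast p.2)))
  | .onem g, α =>
      if α ≤ 0 then .tt
      else .not (g.atLeast (WithTop.untopD 1 ((g.evalF.filter (fun β => 1 - α < β)).min)))
  | .qmax g u, α => .or (g.atLeast α) (u.atLeast α)
  | .qmin g u, α => .and (g.atLeast α) (u.atLeast α)
  | .sup x g, α => .ex x (g.atLeast α)
  | .inf x g, α => .all x (g.atLeast α)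
  | .sep g u, α =>
      SL.orList ((((g.evalF ×ˢ u.evalF).filter (fun p => α ≤ p.1 * p.2)).toList).map
        (fun p => .sep (g.atLeast p.1) (u.atLeast p.2)))
  | .wand φ g, α => .wand φ (g.atLeast α)

end QSLPaper

/-! The translation `⌈f⌉_α` only duplicates subformulae at `q·g + (1−q)·u`, `g·u` and `g ⋆ u`,
where it becomes a disjunction over pairs in `Eval(g) × Eval(u)`. Since `0, 1 ∈ Eval(f)`, a
union of evaluation sets loses two elements, so `|Eval(f)| ≤ 2^(π(f)+1)` and such a disjunction
has at most `2^(π(g)+π(u)+2)` disjuncts. This factor is absorbed into the bound because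
`(π(g)+π(u)+2) + (π(g)+1)² ≤ (π(g)+π(u)+2)²`. -/

theorem two_pow_add_two_pow_le (a b : ℕ) : 2 ^ a + 2 ^ b ≤ 2 ^ (a + b) + 1 := by
  rw [pow_add]
  nlinarith [Nat.one_le_two_pow (n := a), Nat.one_le_two_pow (n := b)]

theorem Finset.card_union_le_two_pow {α : Type*} [DecidableEq α] {s t : Finset α} {a b : ℕ}
    (hst : 2 ≤ (s ∩ t).card) (hs : s.card ≤ 2 ^ (a + 1)) (ht : t.card ≤ 2 ^ (b + 1)) :
    (s ∪ t).card ≤ 2 ^ (a + b + 1) := by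
  have hunion := Finset.card_union_add_card_inter s t
  have hpow := two_pow_add_two_pow_le a b
  rw [pow_succ] at hs ht ⊢
  omega

theorem Finset.card_image₂_le_two_pow {α β γ : Type*} [DecidableEq γ] (f : α → β → γ)
    {s : Finset α} {t : Finset β} {a b : ℕ}
    (hs : s.card ≤ 2 ^ (a + 1)) (ht : t.card ≤ 2 ^ (b + 1)) :
    (Finset.image₂ f s t).card ≤ 2 ^ (1 + a + b + 1) :=
  calc (Finset.image₂ f s t).card ≤ s.card * t.card := Finset.card_image₂_le f s t
    _ ≤ 2 ^ (a + 1) * 2 ^ (b + 1) := Nat.mul_le_mul hs ht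
    _ = 2 ^ (1 + a + b + 1) := by rw [← pow_add]; ring_nf

theorem two_pow_mul_two_pow_sq_le (a b : ℕ) :
    2 ^ (a + b + 2) * 2 ^ ((a + 1) ^ 2) ≤ 2 ^ ((a + b + 2) ^ 2) := by
  rw [← pow_add]
  exact Nat.pow_le_pow_right two_pos (by nlinarith)

theorem two_add_mul_le_three_mul_two_pow_sq {a b s t L : ℕ} (hL : L ≤ 2 ^ (a + b + 2)) :
    2 + L * (1 + 3 * s * 2 ^ ((a + 1) ^ 2) + 3 * t * 2 ^ ((b + 1) ^ 2) + 1) ≤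
      3 * (1 + s + t) * 2 ^ ((a + b + 2) ^ 2) := by
  set Q := 2 ^ ((a + b + 2) ^ 2)
  have hLa : L * 2 ^ ((a + 1) ^ 2) ≤ Q :=
    (Nat.mul_le_mul_right _ hL).trans (two_pow_mul_two_pow_sq_le a b)
  have hLb : L * 2 ^ ((b + 1) ^ 2) ≤ Q :=
    (Nat.mul_le_mul_right _ hL).trans <| by
      simpa only [add_comm b a] using two_pow_mul_two_pow_sq_le b a
  have hLQ : L ≤ Q := (Nat.le_mul_of_pos_right L (by positivity)).trans hLa
  have hQ : 2 ≤ Q := Nat.le_self_pow (by positivity) 2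
  calc 2 + L * (1 + 3 * s * 2 ^ ((a + 1) ^ 2) + 3 * t * 2 ^ ((b + 1) ^ 2) + 1)
      = 2 + 2 * L + 3 * s * (L * 2 ^ ((a + 1) ^ 2)) + 3 * t * (L * 2 ^ ((b + 1) ^ 2)) := by
        ring
    _ ≤ 3 * Q + 3 * s * Q + 3 * t * Q := by gcongr; omega
    _ = 3 * (1 + s + t) * Q := by ring

theorem add_le_three_mul_mul {c n s P : ℕ} (hP : 1 ≤ P) (hn : n ≤ 3 * s * P) :
    c + n ≤ 3 * (c + s) * P := by
  nlinarith

namespace QSLPaper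

section

variable {k : ℕ}

theorem SL.one_le_size (φ : SL k) : 1 ≤ φ.size := by
  cases φ <;> simp only [SL.size] <;> omega

theorem SL.size_orChain_add_one_le {c : ℕ} (φ : SL k) (l : List (SL k))
    (h : ∀ ψ ∈ φ :: l, ψ.size ≤ c) :
    (SL.orChain φ l).size + 1 ≤ (l.length + 1) * (c + 1) := by
  induction l generalizing φ with
  | nil => simpa [SL.orChain] using h φ List.mem_cons_self
  | cons ψ l ih =>
    have hφ := h φ List.mem_cons_self
    have hl := ih ψ fun χ hχ => h χ (List.mem_cons_of_mem φ hχ)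
    simp only [SL.orChain, SL.size, List.length_cons, add_one_mul (l.length + 1)]
    omega

theorem SL.size_orList_le {c : ℕ} (l : List (SL k)) (h : ∀ φ ∈ l, φ.size ≤ c) :
    (SL.orList l).size ≤ 2 + l.length * (c + 1) := by
  cases l with
  | nil => simp [SL.orList, SL.size]
  | cons φ l =>
    have := SL.size_orChain_add_one_le φ l h
    simp only [SL.orList, List.length_cons]
    omega

theorem QSL.zero_mem_evalF_and_one_mem (f : QSL k) : 0 ∈ f.evalF ∧ 1 ∈ f.evalF := by
  induction f with
  | iver | sup | inf | wand | ite | qmax | qmin => simp_all [QSL.evalF]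
  | pch _ _ _ hg hu | mul _ _ hg hu | sep _ _ hg hu =>
    exact ⟨Finset.mem_image₂.2 ⟨0, hg.1, 0, hu.1, by ring⟩,
      Finset.mem_image₂.2 ⟨1, hg.2, 1, hu.2, by ring⟩⟩
  | onem _ hg =>
    exact ⟨Finset.mem_image.2 ⟨1, hg.2, by ring⟩, Finset.mem_image.2 ⟨0, hg.1, by ring⟩⟩

theorem QSL.two_le_card_evalF_inter (g u : QSL k) : 2 ≤ (g.evalF ∩ u.evalF).card := by
  obtain ⟨hg0, hg1⟩ := g.zero_mem_evalF_and_one_mem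
  obtain ⟨hu0, hu1⟩ := u.zero_mem_evalF_and_one_mem
  exact Finset.one_lt_card.2
    ⟨0, Finset.mem_inter.2 ⟨hg0, hu0⟩, 1, Finset.mem_inter.2 ⟨hg1, hu1⟩, zero_ne_one⟩

theorem QSL.card_evalF_le (f : QSL k) : f.evalF.card ≤ 2 ^ (f.psize + 1) := by
  induction f with
  | iver => exact Finset.card_le_two
  | ite _ g u hg hu | qmax g u hg hu | qmin g u hg hu =>
    exact Finset.card_union_le_two_pow (g.two_le_card_evalF_inter u) hg hu
  | pch _ _ _ hg hu | mul _ _ hg hu | sep _ _ hg hu =>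
    exact Finset.card_image₂_le_two_pow _ hg hu
  | onem _ hg => exact Finset.card_image_le.trans hg
  | sup _ _ hg | inf _ _ hg | wand _ _ hg => exact hg

def QSL.SizeBounded (f : QSL k) : Prop :=
  ∀ α, (f.atLeast α).size ≤ 3 * f.size * 2 ^ ((f.psize + 1) ^ 2)

theorem QSL.sizeBounded_iver (φ : SL k) : (QSL.iver φ).SizeBounded := by
  intro α
  have := φ.one_le_size
  simp only [QSL.atLeast, QSL.size, QSL.psize]
  split_ifs <;> norm_num [SL.size] <;> omega

namespace QSL.SizeBounded

variable {g u : QSL k}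

theorem le_of_psize_le (hg : g.SizeBounded) {p : ℕ} (hp : g.psize ≤ p) (α : ℚ) :
    (g.atLeast α).size ≤ 3 * g.size * 2 ^ ((p + 1) ^ 2) :=
  (hg α).trans <| Nat.mul_le_mul_left _ <|
    Nat.pow_le_pow_right two_pos (Nat.pow_le_pow_left (by omega) 2)

theorem add_size_atLeast_le (hg : g.SizeBounded) (hu : u.SizeBounded) (α : ℚ) :
    1 + (g.atLeast α).size + (u.atLeast α).size ≤
      3 * (1 + g.size + u.size) * 2 ^ ((g.psize + u.psize + 1) ^ 2) := by
  have hX := hg.le_of_psize_le (p := g.psize + u.psize) (by omega) α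
  have hY := hu.le_of_psize_le (p := g.psize + u.psize) (by omega) α
  have hP := Nat.one_le_two_pow (n := (g.psize + u.psize + 1) ^ 2)
  nlinarith

theorem size_orList_le (hg : g.SizeBounded) (hu : u.SizeBounded) (mk : SL k → SL k → SL k)
    (hmk : ∀ φ ψ, (mk φ ψ).size = 1 + φ.size + ψ.size)
    {T : Finset (ℚ × ℚ)} (hT : T ⊆ g.evalF ×ˢ u.evalF) :
    (SL.orList (T.toList.map fun p => mk (g.atLeast p.1) (u.atLeast p.2))).size ≤
      3 * (1 + g.size + u.size) * 2 ^ ((1 + g.psize + u.psize + 1) ^ 2) := by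
  have hlen : T.toList.length ≤ 2 ^ (g.psize + u.psize + 2) :=
    calc T.toList.length = T.card := T.length_toList
      _ ≤ (g.evalF ×ˢ u.evalF).card := Finset.card_le_card hT
      _ = g.evalF.card * u.evalF.card := Finset.card_product _ _
      _ ≤ 2 ^ (g.psize + 1) * 2 ^ (u.psize + 1) :=
        Nat.mul_le_mul g.card_evalF_le u.card_evalF_le
      _ = 2 ^ (g.psize + u.psize + 2) := by rw [← pow_add]; ring_nf
  have hdisjuncts : ∀ φ ∈ T.toList.map fun p => mk (g.atLeast p.1) (u.atLeast p.2),
      φ.size ≤ 1 + 3 * g.size * 2 ^ ((g.psize + 1) ^ 2) +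
        3 * u.size * 2 ^ ((u.psize + 1) ^ 2) := by
    simp only [List.forall_mem_map, hmk]
    exact fun p _ => Nat.add_le_add (Nat.add_le_add_left (hg p.1) 1) (hu p.2)
  refine (SL.size_orList_le _ hdisjuncts).trans ?_
  rw [List.length_map, show 1 + g.psize + u.psize + 1 = g.psize + u.psize + 2 by ring]
  exact two_add_mul_le_three_mul_two_pow_sq hlen

theorem ite (B : SL k) (hg : g.SizeBounded) (hu : u.SizeBounded) :
    (QSL.ite B g u).SizeBounded := by
  intro α
  have hgu := hg.add_size_atLeast_le hu α
  have hP := Nat.one_le_two_pow (n := (g.psize + u.psize + 1) ^ 2)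
  simp only [QSL.atLeast, QSL.size, QSL.psize, SL.size]
  nlinarith

theorem pch (q : ℚ) (hg : g.SizeBounded) (hu : u.SizeBounded) : (QSL.pch q g u).SizeBounded :=
  fun _ => hg.size_orList_le hu SL.and (fun _ _ => rfl) (Finset.filter_subset _ _)

theorem mul (hg : g.SizeBounded) (hu : u.SizeBounded) : (QSL.mul g u).SizeBounded :=
  fun _ => hg.size_orList_le hu SL.and (fun _ _ => rfl) (Finset.filter_subset _ _)

theorem onem (hg : g.SizeBounded) : g.onem.SizeBounded := by
  intro α
  simp only [QSL.atLeast, QSL.size, QSL.psize]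
  split_ifs
  · show 0 < _
    positivity
  · exact add_le_three_mul_mul Nat.one_le_two_pow (hg _)

theorem qmax (hg : g.SizeBounded) (hu : u.SizeBounded) : (QSL.qmax g u).SizeBounded :=
  hg.add_size_atLeast_le hu

theorem qmin (hg : g.SizeBounded) (hu : u.SizeBounded) : (QSL.qmin g u).SizeBounded :=
  hg.add_size_atLeast_le hu

theorem sup (x : Var) (hg : g.SizeBounded) : (QSL.sup x g).SizeBounded :=
  fun α => add_le_three_mul_mul Nat.one_le_two_pow (hg α)

theorem inf (x : Var) (hg : g.SizeBounded) : (QSL.inf x g).SizeBounded :=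
  fun α => add_le_three_mul_mul Nat.one_le_two_pow (hg α)

theorem sep (hg : g.SizeBounded) (hu : u.SizeBounded) : (QSL.sep g u).SizeBounded :=
  fun _ => hg.size_orList_le hu SL.sep (fun _ _ => rfl) (Finset.filter_subset _ _)

theorem wand (φ : SL k) (hg : g.SizeBounded) : (QSL.wand φ g).SizeBounded :=
  fun α => (add_le_three_mul_mul Nat.one_le_two_pow (hg α)).trans_eq <| by
    simp only [QSL.size, QSL.psize]
    ring

end QSL.SizeBounded

end

theorem atLeast_size_le_general {k : ℕ} (f : QSL k) (α : ℚ) :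
    (f.atLeast α).size ≤ 3 * f.size * 2 ^ ((f.psize + 1) ^ 2) := by
  suffices f.SizeBounded from this α
  induction f with
  | iver φ => exact QSL.sizeBounded_iver φ
  | ite B _ _ hg hu => exact hg.ite B hu
  | pch q _ _ hg hu => exact hg.pch q hu
  | mul _ _ hg hu => exact hg.mul hu
  | onem _ hg => exact hg.onem
  | qmax _ _ hg hu => exact hg.qmax hu
  | qmin _ _ hg hu => exact hg.qmin hu
  | sup x _ hg => exact hg.sup x
  | inf x _ hg => exact hg.inf x
  | sep _ _ hg hu => exact hg.sep hu
  | wand φ _ hg => exact hg.wand φ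

/-- For every `QSL(𝔄)` formula `f` and every rational
probability `α ∈ [0,1]`, the size of the constructed `SL(𝔄)` formula `⌈f⌉_α`
is at most `3 · |f| · 2^((π(f)+1)²)`. -/
theorem atLeast_size_le {k : ℕ} (hk : 1 ≤ k)
    (𝔄 : Set (Set (HState k))) (f : QSL k)
    (hWF : f.WF) (hA : f.atomsIn 𝔄)
    (α : ℚ) (hα0 : 0 ≤ α) (hα1 : α ≤ 1) :
    (f.atLeast α).size ≤ 3 * f.size * 2 ^ ((f.psize + 1) ^ 2) :=
  atLeast_size_le_general f α

end QSLPaper
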